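/- Let λ > 0 and let b* > 0 be a point at which b ↦ log(1 + f*(b)) − λ·b attains its maximum over [0, ∞). Then the frequency φ = f*(b*) satisfies (1 + φ)·∑_{k∈K} α_k/(1 − c_k φ)² = 1/λ; conversely, if φ ∈ [0, 1/max_k c_k) satisfies this equation and b* is the bandwidth with f*(b*) = φ, then b* maximizes log(1 + f*(b)) − λ·b over [0, ∞). -/

import Mathlib

/-!
Reparametrize by the frequency: on `0 ≤ f < 1 / maxₖ cₖ` the bandwidth `b` is strictly increasing
with inverse `f*`, so maximizing `log (1 + f*(b)) - λ b` over `b ≥ 0` is maximizing the concave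
utility `U(f) = log (1 + f) - λ b(f)` over the frequency interval. A positive maximizer lies in the
interior, where Fermat's rule gives `U'(φ) = 0`; conversely `U'(φ) = 0` makes `φ` a global maximum
because `U` lies below each of its tangent lines. Clearing denominators, `U'(φ) = 0` is the stated
equation.
-/

open Finset

lemma Real.log_sub_log_le_div {x y : ℝ} (hx : 0 < x) (hy : 0 < y) :
    Real.log y - Real.log x ≤ (y - x) / x := by
  have h := Real.log_le_sub_one_of_pos (div_pos hy hx)
  rw [Real.log_div hy.ne' hx.ne'] at h
  calc Real.log y - Real.log x ≤ y / x - 1 := h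
    _ = (y - x) / x := by field_simp

/-- The tangent line of `f ↦ a f / (1 - c f)` at `x` lies below it while `1 - c f > 0`. -/
lemma mul_sub_div_sq_le_div_sub_div {a c x y : ℝ} (ha : 0 ≤ a) (hc : 0 ≤ c)
    (hx : 0 < 1 - c * x) (hy : 0 < 1 - c * y) :
    (y - x) * (a / (1 - c * x) ^ 2) ≤ a * y / (1 - c * y) - a * x / (1 - c * x) := by
  have gap : a * y / (1 - c * y) - a * x / (1 - c * x) - (y - x) * (a / (1 - c * x) ^ 2)
      = a * c * (y - x) ^ 2 / ((1 - c * y) * (1 - c * x) ^ 2) := by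
    rw [div_sub_div _ _ hy.ne' hx.ne', mul_div_assoc', div_sub_div _ _ (by positivity) (by positivity),
      div_eq_div_iff (by positivity) (by positivity)]
    ring
  have : 0 ≤ a * c * (y - x) ^ 2 / ((1 - c * y) * (1 - c * x) ^ 2) := by positivity
  linarith

lemma one_sub_mul_pos_of_mem_Ico {ι : Type*} [Fintype ι] [Nonempty ι] {c : ι → ℝ}
    (hc : ∀ k, 0 < c k) {φ : ℝ} (hφ : φ ∈ Set.Ico (0 : ℝ) (1 / univ.sup' univ_nonempty c))
    (k : ι) : 0 < 1 - c k * φ := by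
  have hck : c k ≤ univ.sup' univ_nonempty c := le_sup' c (mem_univ k)
  have hφ' : univ.sup' univ_nonempty c * φ < 1 := by
    rw [← lt_div_iff₀' ((hc k).trans_le hck)]
    exact hφ.2
  nlinarith [hφ.1]

namespace Bandwidth

variable {ι : Type*} [Fintype ι] (α c : ι → ℝ)

noncomputable def bandwidth (f : ℝ) : ℝ := ∑ k, α k * f / (1 - c k * f)

noncomputable def utility (lam f : ℝ) : ℝ := Real.log (1 + f) - lam * bandwidth α c f

noncomputable def utilityDeriv (lam f : ℝ) : ℝ := 1 / (1 + f) - lam * ∑ k, α k / (1 - c k * f) ^ 2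

variable {α c}

lemma bandwidth_nonneg (hα : ∀ k, 0 ≤ α k) {f : ℝ} (hf : 0 ≤ f)
    (hden : ∀ k, 0 < 1 - c k * f) : 0 ≤ bandwidth α c f :=
  sum_nonneg fun k _ => div_nonneg (mul_nonneg (hα k) hf) (hden k).le

lemma bandwidth_strictMonoOn [Nonempty ι] (hα : ∀ k, 0 < α k) :
    StrictMonoOn (bandwidth α c) {f | ∀ k, 0 < 1 - c k * f} := by
  intro x hx y hy hxy
  refine sum_lt_sum_of_nonempty univ_nonempty fun k _ => ?_
  rw [div_lt_div_iff₀ (hx k) (hy k)]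
  nlinarith [hα k]

lemma apply_bandwidth_of_bandwidth_apply [Nonempty ι] (hα : ∀ k, 0 < α k) {g : ℝ → ℝ}
    {s : Set ℝ} (hs : ∀ f ∈ s, 0 ≤ f ∧ ∀ k, 0 < 1 - c k * f) (hgs : ∀ x, 0 ≤ x → g x ∈ s)
    (hg : ∀ x, 0 ≤ x → bandwidth α c (g x) = x) {f : ℝ} (hf : f ∈ s) :
    g (bandwidth α c f) = f :=
  have hb := bandwidth_nonneg (fun k => (hα k).le) (hs f hf).1 (hs f hf).2
  (bandwidth_strictMonoOn hα).injOn (hs _ (hgs _ hb)).2 (hs f hf).2 (hg _ hb)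

lemma hasDerivAt_utility (lam : ℝ) {f : ℝ} (hf : 0 < 1 + f) (hden : ∀ k, 1 - c k * f ≠ 0) :
    HasDerivAt (utility α c lam) (utilityDeriv α c lam f) f := by
  have hterm : ∀ k, HasDerivAt (fun f => α k * f / (1 - c k * f)) (α k / (1 - c k * f) ^ 2) f := by
    intro k
    refine (((hasDerivAt_id' f).const_mul (α k)).div
      (((hasDerivAt_id' f).const_mul (c k)).const_sub 1) (hden k)).congr_deriv ?_
    field_simp
    ring
  have hsum := HasDerivAt.fun_sum fun k (_ : k ∈ univ) => hterm k
  have hlog := ((hasDerivAt_id' f).const_add 1).log hf.ne'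
  exact hlog.sub (hsum.const_mul lam)

lemma utility_sub_utility_le (hα : ∀ k, 0 ≤ α k) (hc : ∀ k, 0 ≤ c k) {lam x y : ℝ}
    (hlam : 0 ≤ lam) (hx : 0 < 1 + x) (hy : 0 < 1 + y)
    (hxden : ∀ k, 0 < 1 - c k * x) (hyden : ∀ k, 0 < 1 - c k * y) :
    utility α c lam y - utility α c lam x ≤ (y - x) * utilityDeriv α c lam x := by
  have hlog := Real.log_sub_log_le_div hx hy
  have hb : (y - x) * ∑ k, α k / (1 - c k * x) ^ 2 ≤ bandwidth α c y - bandwidth α c x := by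
    rw [mul_sum, bandwidth, bandwidth, ← sum_sub_distrib]
    exact sum_le_sum fun k _ => mul_sub_div_sq_le_div_sub_div (hα k) (hc k) (hxden k) (hyden k)
  have hb' := mul_le_mul_of_nonneg_left hb hlam
  have hexpand : (y - x) * utilityDeriv α c lam x
      = (y - x) / (1 + x) - lam * ((y - x) * ∑ k, α k / (1 - c k * x) ^ 2) := by
    rw [utilityDeriv]
    ring
  rw [add_sub_add_left_eq_sub] at hlog
  rw [hexpand, utility, utility]
  linarith

lemma isMaxOn_utility_of_utilityDeriv_eq_zero (hα : ∀ k, 0 ≤ α k) (hc : ∀ k, 0 ≤ c k)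
    {lam φ : ℝ} (hlam : 0 ≤ lam) {s : Set ℝ} (hs : ∀ f ∈ s, 0 ≤ f ∧ ∀ k, 0 < 1 - c k * f)
    (hφ : φ ∈ s) (hzero : utilityDeriv α c lam φ = 0) : IsMaxOn (utility α c lam) s φ :=
  isMaxOn_iff.2 fun f hf => by
    have := utility_sub_utility_le hα hc hlam (by linarith [(hs φ hφ).1])
      (by linarith [(hs f hf).1]) (hs φ hφ).2 (hs f hf).2
    rw [hzero, mul_zero] at this
    linarith

lemma utilityDeriv_eq_zero_iff {lam f : ℝ} (hlam : lam ≠ 0) (hf : 1 + f ≠ 0) :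
    utilityDeriv α c lam f = 0 ↔ (1 + f) * ∑ k, α k / (1 - c k * f) ^ 2 = 1 / lam := by
  rw [utilityDeriv, sub_eq_zero, div_eq_iff hf, eq_div_iff hlam]
  constructor <;> intro h <;> linarith

end Bandwidth

open Bandwidth

/-- First-order characterization of the per-service optimum: a positive maximizer `b*` of
`b ↦ log(1 + f*(b)) − λ·b` has frequency `φ = f*(b*)` solving
`(1 + φ) ∑_k α_k/(1 − c_k φ)² = 1/λ`, and conversely. -/
theorem stmt_10 {ι : Type*} [Fintype ι] [Nonempty ι] (α c : ι → ℝ)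
    (hα : ∀ k, 0 < α k) (hc : ∀ k, 0 < c k)
    (fstar : ℝ → ℝ)
    (hrange : ∀ x : ℝ, 0 ≤ x →
      fstar x ∈ Set.Ico (0 : ℝ) (1 / Finset.univ.sup' Finset.univ_nonempty c))
    (hinv : ∀ x : ℝ, 0 ≤ x → ∑ k, α k * fstar x / (1 - c k * fstar x) = x)
    (lam : ℝ) (hlam : 0 < lam) :
    (∀ bstar : ℝ, 0 < bstar →
      IsMaxOn (fun b => Real.log (1 + fstar b) - lam * b) (Set.Ici 0) bstar →
      (1 + fstar bstar) * ∑ k, α k / (1 - c k * fstar bstar) ^ 2 = 1 / lam) ∧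
    (∀ φ : ℝ, φ ∈ Set.Ico (0 : ℝ) (1 / Finset.univ.sup' Finset.univ_nonempty c) →
      (1 + φ) * ∑ k, α k / (1 - c k * φ) ^ 2 = 1 / lam →
      ∀ bstar : ℝ, 0 ≤ bstar → fstar bstar = φ →
        IsMaxOn (fun b => Real.log (1 + fstar b) - lam * b) (Set.Ici 0) bstar) := by
  set D := Set.Ico (0 : ℝ) (1 / univ.sup' univ_nonempty c)
  have hD : ∀ φ ∈ D, 0 ≤ φ ∧ ∀ k, 0 < 1 - c k * φ := fun φ hφ =>
    ⟨hφ.1, one_sub_mul_pos_of_mem_Ico hc hφ⟩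
  have hobjective : ∀ x, 0 ≤ x →
      Real.log (1 + fstar x) - lam * x = utility α c lam (fstar x) := by
    intro x hx
    rw [utility, bandwidth, hinv x hx]
  refine ⟨fun bstar hb hmax => ?_, fun φ hφ hφeq bstar hb hfb => ?_⟩
  · have hφ := hrange bstar hb.le
    have hφpos : 0 < fstar bstar := hφ.1.lt_of_ne fun h0 => hb.ne' <| by
      rw [← hinv bstar hb.le, ← h0]
      simp
    have hmaxU : IsMaxOn (utility α c lam) D (fstar bstar) := isMaxOn_iff.2 fun ψ hψ => by
      have hbψ := bandwidth_nonneg (fun k => (hα k).le) hψ.1 (hD ψ hψ).2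
      have := isMaxOn_iff.1 hmax _ hbψ
      beta_reduce at this
      rw [hobjective _ hbψ, hobjective _ hb.le,
        apply_bandwidth_of_bandwidth_apply hα hD hrange hinv hψ] at this
      exact this
    have hzero := (hmaxU.isLocalMax (Ico_mem_nhds hφpos hφ.2)).hasDerivAt_eq_zero
      (hasDerivAt_utility lam (by linarith) fun k => ((hD _ hφ).2 k).ne')
    exact (utilityDeriv_eq_zero_iff hlam.ne' (by linarith)).1 hzero
  · have hzero := (utilityDeriv_eq_zero_iff (α := α) (c := c) hlam.ne' (by linarith [hφ.1])).2 hφeq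
    have hmaxU := isMaxOn_utility_of_utilityDeriv_eq_zero (fun k => (hα k).le)
      (fun k => (hc k).le) hlam.le hD hφ hzero
    refine isMaxOn_iff.2 fun x (hx : 0 ≤ x) => ?_
    rw [hobjective x hx, hobjective bstar hb, hfb]
    exact hmaxU (hrange x hx)
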